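/- The exponential generating function f(x) = ∑_{t≥1} t^{t-1}·x^t/t! for rooted labeled trees satisfies f(x)² = ∑_{t≥2} 2·(t-1)·t^{t-2}·x^t/t! as formal power series. -/

import Mathlib

/-!
With `a n = n ^ (n - 1)` (and `a 0 = 0`), squaring an exponential generating function is binomial
convolution, so the claim is `∑_{i+j=n} C(n,i) a_i a_j = 2 (n-1) n^(n-2)`. Multiplying the sum by
`n = i + j` splits it into two sums exchanged by `i ↔ j`; as `j a_j = j^j` for `j > 0`, each equals
`n^n - n^(n-1)` by the Abel-type identity `∑_{i+j=n} C(n,i) a_i (y+j)^j = n (y+n)^(n-1)` at `y = 0`.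
That identity is proved by induction on `n` as a polynomial identity in `y`: both sides have
derivative `n` times the previous case at `y + 1`, and both vanish at `y = -n`, where the left side
is the `n`-th finite difference of `r ↦ r^(n-1)`.
-/

open Finset Polynomial
open scoped Nat

-- The `if` is needed: in `ℕ`, `0 ^ (0 - 1) = 1`, but there are no rooted trees on no vertices.
def rootedTreeCount (n : ℕ) : ℕ := if n = 0 then 0 else n ^ (n - 1)

@[simp] lemma rootedTreeCount_zero : rootedTreeCount 0 = 0 := rfl

@[simp] lemma rootedTreeCount_succ (n : ℕ) : rootedTreeCount (n + 1) = (n + 1) ^ n := rfl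

lemma rootedTreeCount_mul_pow {i j : ℕ} (h : 2 ≤ i + j) :
    rootedTreeCount i * i ^ j = i ^ (i + j - 1) := by
  rcases eq_or_ne i 0 with rfl | hi
  · rw [rootedTreeCount_zero, zero_mul, zero_pow (by omega)]
  · rw [rootedTreeCount, if_neg hi, ← pow_add]
    congr 1
    omega

theorem Finset.Nat.sum_antidiagonal_neg_one_pow_mul_choose_mul_pow {R : Type*} [CommRing R]
    {n j : ℕ} (h : j < n) :
    ∑ p ∈ antidiagonal n, (-1 : R) ^ p.2 * n.choose p.1 * (p.1 : R) ^ j = 0 := by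
  have := fwdDiff_iter_eq_sum_shift (1 : R) (fun r => r ^ j) n 0
  rw [fwdDiff_iter_pow_eq_zero_of_lt h] at this
  rw [Nat.sum_antidiagonal_eq_sum_range_succ (fun a b => (-1 : R) ^ b * n.choose a * (a : R) ^ j)]
  simpa using this.symm

theorem Polynomial.eq_zero_of_derivative_eq_zero_of_isRoot {R : Type*} [Semiring R]
    [IsAddTorsionFree R] {p : R[X]} {x : R} (hp : derivative p = 0) (hx : p.IsRoot x) : p = 0 := by
  rw [eq_C_of_derivative_eq_zero hp] at hx ⊢
  simpa using hx

section Abel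

variable {R : Type*} [CommRing R]

noncomputable def abelPoly (n : ℕ) (y : R) : R[X] :=
  ∑ p ∈ antidiagonal n, ((n.choose p.1 * rootedTreeCount p.1 : ℕ) : R[X]) * (X + C (y + p.2)) ^ p.2

theorem derivative_abelPoly_succ (m : ℕ) (y : R) :
    derivative (abelPoly (m + 1) y) = ((m + 1 : ℕ) : R[X]) * abelPoly m (y + 1) := by
  have hterm : ∀ p ∈ antidiagonal m,
      (((m + 1).choose p.1 * rootedTreeCount p.1 : ℕ) : R[X]) *
          (C ((p.2 + 1 : ℕ) : R) * (X + C (y + (p.2 + 1 : ℕ))) ^ p.2) =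
        ((m + 1 : ℕ) : R[X]) * (((m.choose p.1 * rootedTreeCount p.1 : ℕ) : R[X]) *
          (X + C (y + 1 + p.2)) ^ p.2) := by
    rintro ⟨i, j⟩ hij
    rw [HasAntidiagonal.mem_antidiagonal] at hij
    have hchoose := Nat.choose_mul_succ_eq m i
    rw [show m + 1 - i = j + 1 by omega] at hchoose
    have hcoeff : (m + 1).choose i * rootedTreeCount i * (j + 1) =
        (m + 1) * (m.choose i * rootedTreeCount i) := by
      rw [mul_right_comm, ← hchoose]
      ring
    have hshift : y + ((j + 1 : ℕ) : R) = y + 1 + j := by push_cast; ring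
    rw [hshift, map_natCast, ← mul_assoc, ← Nat.cast_mul, hcoeff]
    push_cast
    ring
  rw [abelPoly, abelPoly, derivative_sum, Nat.sum_antidiagonal_succ', mul_sum]
  simp only [derivative_natCast_mul, derivative_X_add_C_pow, Nat.cast_zero, C_0, zero_mul,
    mul_zero, zero_add, Nat.add_sub_cancel]
  exact sum_congr rfl hterm

theorem eval_abelPoly_neg {n : ℕ} (hn : 2 ≤ n) (y : R) :
    eval (-(y + n)) (abelPoly n y) = 0 := by
  have hterm : ∀ p ∈ antidiagonal n,
      ((n.choose p.1 * rootedTreeCount p.1 : ℕ) : R) * (-(y + n) + (y + p.2)) ^ p.2 =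
        (-1) ^ p.2 * n.choose p.1 * (p.1 : R) ^ (n - 1) := by
    rintro ⟨i, j⟩ hij
    rw [HasAntidiagonal.mem_antidiagonal] at hij
    have hcount : (rootedTreeCount i : R) * (i : R) ^ j = (i : R) ^ (n - 1) := by
      rw [← Nat.cast_pow, ← Nat.cast_pow, ← Nat.cast_mul,
        rootedTreeCount_mul_pow (i := i) (j := j) (by omega), hij]
    rw [show -(y + n) + (y + j) = -(i : R) by rw [← hij]; push_cast; ring, neg_pow]
    push_cast
    linear_combination ((-1) ^ j * n.choose i : R) * hcount
  simp only [abelPoly, eval_finsetSum, eval_mul, eval_natCast, eval_pow, eval_add, eval_X, eval_C]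
  rw [sum_congr rfl hterm, Nat.sum_antidiagonal_neg_one_pow_mul_choose_mul_pow (by omega)]

theorem abelPoly_succ [IsAddTorsionFree R] (m : ℕ) (y : R) :
    abelPoly (m + 1) y = ((m + 1 : ℕ) : R[X]) * (X + C (y + (m + 1 : ℕ))) ^ m := by
  induction m generalizing y with
  | zero => simp [abelPoly, Nat.sum_antidiagonal_succ]
  | succ m ih =>
    rw [← sub_eq_zero]
    apply eq_zero_of_derivative_eq_zero_of_isRoot (x := -(y + (m + 1 + 1 : ℕ)))
    · rw [derivative_sub, derivative_abelPoly_succ, ih, derivative_natCast_mul,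
        derivative_X_add_C_pow, map_natCast]
      push_cast
      ring_nf
    · rw [IsRoot.def, eval_sub, eval_abelPoly_neg (by omega), eval_natCast_mul, eval_pow, eval_add,
        eval_X, eval_C, neg_add_cancel, zero_pow m.succ_ne_zero, mul_zero, sub_zero]

end Abel

theorem sum_antidiagonal_choose_mul_rootedTreeCount_mul_pow_self (m : ℕ) :
    ∑ p ∈ antidiagonal (m + 1), (m + 1).choose p.1 * rootedTreeCount p.1 * p.2 ^ p.2 =
      (m + 1) ^ (m + 1) := by
  have h := congrArg (eval 0) (abelPoly_succ m (0 : ℤ))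
  simp only [abelPoly, eval_finsetSum, eval_mul, eval_natCast, eval_pow, eval_add, eval_X, eval_C,
    zero_add] at h
  rw [mul_comm, ← pow_succ] at h
  exact_mod_cast h

theorem sum_antidiagonal_choose_mul_rootedTreeCount_mul_rootedTreeCount (n : ℕ) :
    ∑ p ∈ antidiagonal n, n.choose p.1 * rootedTreeCount p.1 * rootedTreeCount p.2 =
      2 * (n - 1) * n ^ (n - 2) := by
  obtain _ | m := n
  · simp
  set U := ∑ p ∈ antidiagonal (m + 1),
    (m + 1).choose p.1 * rootedTreeCount p.1 * (p.2 * rootedTreeCount p.2) with hU_def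
  have hU : U + (m + 1) ^ m = (m + 1) ^ (m + 1) := by
    rw [hU_def, ← sum_antidiagonal_choose_mul_rootedTreeCount_mul_pow_self, Nat.sum_antidiagonal_succ',
      Nat.sum_antidiagonal_succ']
    simp only [Nat.choose_self, rootedTreeCount_succ, rootedTreeCount_zero, one_mul, mul_zero,
      mul_one, zero_add, pow_zero, ← pow_succ']
    ring
  have hswap : ∑ p ∈ antidiagonal (m + 1),
      (m + 1).choose p.1 * (p.1 * rootedTreeCount p.1) * rootedTreeCount p.2 = U := by
    rw [← Nat.sum_antidiagonal_swap]
    refine sum_congr rfl fun p hp => ?_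
    rw [Nat.choose_symm_of_eq_add (HasAntidiagonal.mem_antidiagonal.1 hp).symm]
    simp only [Prod.fst_swap, Prod.snd_swap]
    ring
  have hmul : (m + 1) * ∑ p ∈ antidiagonal (m + 1),
      (m + 1).choose p.1 * rootedTreeCount p.1 * rootedTreeCount p.2 = 2 * U := by
    rw [two_mul]
    nth_rw 1 [← hswap]
    rw [mul_sum, ← sum_add_distrib]
    refine sum_congr rfl fun p hp => ?_
    rw [← (HasAntidiagonal.mem_antidiagonal.1 hp)]
    ring
  have hpow : (m + 1) * (2 * m * (m + 1) ^ (m - 1)) + 2 * (m + 1) ^ m = 2 * (m + 1) ^ (m + 1) := by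
    obtain _ | k := m
    · simp
    · simp only [Nat.add_sub_cancel]
      ring
  rw [Nat.add_sub_cancel, show m + 1 - 2 = m - 1 by omega]
  apply Nat.eq_of_mul_eq_mul_left m.succ_pos
  linarith

theorem PowerSeries.mk_div_factorial_mul_mk_div_factorial {K : Type*} [Field K] [CharZero K]
    (f g : ℕ → K) :
    mk (fun n => f n / n !) * mk (fun n => g n / n !) =
      mk fun n => (∑ p ∈ antidiagonal n, n.choose p.1 * f p.1 * g p.2) / n ! := by
  ext n
  rw [coeff_mul, coeff_mk, sum_div]
  refine sum_congr rfl fun ⟨i, j⟩ hij => ?_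
  rw [HasAntidiagonal.mem_antidiagonal] at hij
  subst hij
  simp only [coeff_mk]
  have hchoose : ((i + j).choose i : K) ≠ 0 := by
    exact_mod_cast (Nat.choose_pos (Nat.le_add_right i j)).ne'
  rw [← Nat.add_choose_mul_factorial_mul_factorial i j, ← Nat.choose_symm_add, Nat.cast_mul,
    Nat.cast_mul, mul_assoc, mul_assoc, mul_div_mul_left _ _ hchoose, div_mul_div_comm]

theorem tree_egf_square :
    (PowerSeries.mk fun t : ℕ =>
        if t = 0 then (0 : ℚ) else (t : ℚ) ^ (t - 1) / (t.factorial : ℚ)) ^ 2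
      = PowerSeries.mk fun t : ℕ =>
          if 2 ≤ t then 2 * ((t : ℚ) - 1) * (t : ℚ) ^ (t - 2) / (t.factorial : ℚ)
          else 0 := by
  have hegf : (PowerSeries.mk fun t : ℕ =>
      if t = 0 then (0 : ℚ) else (t : ℚ) ^ (t - 1) / (t.factorial : ℚ)) =
        PowerSeries.mk fun t => (rootedTreeCount t : ℚ) / t ! := by
    congr 1
    funext t
    obtain _ | t := t <;> simp
  rw [hegf, sq, PowerSeries.mk_div_factorial_mul_mk_div_factorial]
  congr 1
  funext t
  have hsum := congrArg (Nat.cast (R := ℚ))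
    (sum_antidiagonal_choose_mul_rootedTreeCount_mul_rootedTreeCount t)
  push_cast at hsum
  rw [hsum]
  split_ifs with ht
  · rw [Nat.cast_sub (by omega), Nat.cast_one]
  · interval_cases t <;> simp
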